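/- arXiv:2412.07886 — 6 statements merged into one kernel-verified Lean document; each statement's English description precedes it below -/
import Mathlib

section
/- For the 2×2 upper triangular real matrices M1 = [[(π−α)/2, −(π+α)/2·ε],[0, −(π−α)/2]] and M2 = [[(π+α)/2, (π−α)/2·ε],[0, −(π+α)/2]] with −π < α < π and ε ≠ 0, the product exp(iM1)·exp(iM2) (as 2×2 complex matrices) equals [[−1, −ε(π²+α²)(1+e^{−iα})/(π²−α²)],[0, −1]]. -/
/-!
An upper triangular `2 × 2` matrix with distinct diagonal entries `a`, `d` is diagonalised by its
eigenvectors `(1, 0)` and `(b, d - a)`, which gives its exponential in closed form. For the two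
matrices at hand the diagonal entries of `exp (i M₁)` and `exp (i M₂)` are `±i t^{±1}` with
`t = exp (i α / 2)`, so the product becomes an identity of rational functions in `t`.
-/

open Real Complex

theorem Matrix.exp_upperTriangular_fin_two {𝕜 : Type*} [NormedField 𝕜] [NormedAlgebra ℚ 𝕜]
    [CompleteSpace 𝕜] {a d : 𝕜} (b : 𝕜) (had : a - d ≠ 0) :
    NormedSpace.exp !![a, b; 0, d] =
      !![NormedSpace.exp a, b * (NormedSpace.exp a - NormedSpace.exp d) / (a - d);
        0, NormedSpace.exp d] := by
  have hda : d - a ≠ 0 := by rwa [← neg_sub, neg_ne_zero]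
  set P : Matrix (Fin 2) (Fin 2) 𝕜 := !![1, b; 0, d - a]
  have hP : P * !![1, b / (a - d); 0, 1 / (d - a)] = 1 := by
    rw [Matrix.mul_fin_two, Matrix.one_fin_two]
    ext i j; fin_cases i <;> fin_cases j <;> simp [field]
  have hP_inv : P⁻¹ = !![1, b / (a - d); 0, 1 / (d - a)] := Matrix.inv_eq_right_inv hP
  have hdiag : !![a, b; 0, d] = P * Matrix.diagonal ![a, d] * P⁻¹ := by
    rw [hP_inv, Matrix.diagonal_fin_two, Matrix.mul_fin_two, Matrix.mul_fin_two]
    ext i j; fin_cases i <;> fin_cases j <;> simp [field]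
    ring
  rw [hdiag, Matrix.exp_conj _ _ (.of_mul_eq_one _ hP), Matrix.exp_diagonal, hP_inv,
    Pi.exp_def, Matrix.diagonal_fin_two, Matrix.mul_fin_two, Matrix.mul_fin_two]
  ext i j; fin_cases i <;> fin_cases j <;> simp [field]
  ring

theorem Complex.exp_I_mul_pi_add_div_two (x : ℂ) :
    cexp (I * ((π + x) / 2)) = I * cexp (I * x / 2) := by
  rw [show I * ((π + x) / 2) = π / 2 * I + I * x / 2 by ring, Complex.exp_add,
    exp_pi_div_two_mul_I]

theorem Complex.exp_I_mul_pi_sub_div_two (x : ℂ) :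
    cexp (I * ((π - x) / 2)) = I * (cexp (I * x / 2))⁻¹ := by
  rw [show I * ((π - x) / 2) = π / 2 * I + -(I * x / 2) by ring, Complex.exp_add,
    exp_pi_div_two_mul_I, Complex.exp_neg]

theorem exp_prod_minimal_example_general (α ε : ℝ) (hα₁ : -π < α) (hα₂ : α < π) :
    NormedSpace.exp (Complex.I • (!![((π : ℂ) - α)/2, -((π : ℂ) + α)/2 * ε; 0, -((π : ℂ) - α)/2])) *
      NormedSpace.exp (Complex.I • (!![((π : ℂ) + α)/2, ((π : ℂ) - α)/2 * ε; 0, -((π : ℂ) + α)/2])) =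
    !![(-1 : ℂ), -(ε : ℂ) * ((π : ℂ)^2 + (α : ℂ)^2) * (1 + Complex.exp (-Complex.I * α)) / ((π : ℂ)^2 - (α : ℂ)^2); 0, -1] := by
  have hm : (π : ℂ) - α ≠ 0 := by exact_mod_cast (sub_pos.2 hα₂).ne'
  have hp : (π : ℂ) + α ≠ 0 := by exact_mod_cast (neg_lt_iff_pos_add'.1 hα₁).ne'
  simp only [Matrix.smul_of, Matrix.smul_cons, Matrix.smul_empty, smul_eq_mul, mul_zero]
  rw [Matrix.exp_upperTriangular_fin_two, Matrix.exp_upperTriangular_fin_two, Matrix.mul_fin_two,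
    ← Complex.exp_eq_exp_ℂ]
  rotate_left
  · exact fun h ↦ hp (by linear_combination -I * h + (π + α) * I_sq)
  · exact fun h ↦ hm (by linear_combination -I * h + (π - α) * I_sq)
  have h_exp_neg : cexp (-I * α) = (cexp (I * α / 2))⁻¹ ^ 2 := by
    rw [← Complex.exp_neg, ← Complex.exp_nat_mul]
    congr 1
    push_cast
    ring
  simp only [neg_div, mul_neg, Complex.exp_neg, Complex.exp_I_mul_pi_add_div_two,
    Complex.exp_I_mul_pi_sub_div_two, mul_inv, inv_inv, inv_I, h_exp_neg,
    sub_neg_eq_add, ← two_mul]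
  rw [show (π : ℂ) ^ 2 - α ^ 2 = (π - α) * (π + α) by ring]
  ext i j; fin_cases i <;> fin_cases j <;> simp [field]
  ring

theorem exp_prod_minimal_example (α ε : ℝ) (hα₁ : -π < α) (hα₂ : α < π) (hε : ε ≠ 0) :
    NormedSpace.exp (Complex.I • (!![((π : ℂ) - α)/2, -((π : ℂ) + α)/2 * ε; 0, -((π : ℂ) - α)/2])) *
      NormedSpace.exp (Complex.I • (!![((π : ℂ) + α)/2, ((π : ℂ) - α)/2 * ε; 0, -((π : ℂ) + α)/2])) =
    !![(-1 : ℂ), -(ε : ℂ) * ((π : ℂ)^2 + (α : ℂ)^2) * (1 + Complex.exp (-Complex.I * α)) / ((π : ℂ)^2 - (α : ℂ)^2); 0, -1] :=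
  exp_prod_minimal_example_general α ε hα₁ hα₂
end

section
/- If A is a 2×2 complex matrix with trace 0 and exp(A) = [[−1, c],[0, −1]] with c ≠ 0, then a contradiction follows; i.e., no traceless 2×2 complex matrix has exponential equal to a non-diagonalizable matrix with both eigenvalues −1. -/
/-!
Since `A` commutes with `exp A = !![-1, c; 0, -1]` and `c ≠ 0`, it lies in the centralizer of a
Jordan block: `A` is upper triangular with equal diagonal entries. Being traceless, it is then
strictly upper triangular, so `A ^ 2 = 0` and `exp A = 1 + A` has trace `2`, not `-2`.
-/

open Finset
open scoped Nat

namespace NormedSpace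

variable {𝔸 : Type*} [Ring 𝔸] [Algebra ℚ 𝔸] [TopologicalSpace 𝔸] [IsTopologicalRing 𝔸]

theorem exp_eq_sum_range_of_pow_eq_zero {x : 𝔸} {k : ℕ} (h : x ^ k = 0) :
    exp x = ∑ n ∈ range k, (n !⁻¹ : ℚ) • x ^ n := by
  rw [exp_eq_tsum_rat]
  refine tsum_eq_sum fun n hn => ?_
  rw [← Nat.sub_add_cancel (not_lt.mp (mem_range.not.mp hn)), pow_add, h, mul_zero, smul_zero]

theorem exp_eq_one_add_of_sq_eq_zero {x : 𝔸} (h : x ^ 2 = 0) : exp x = 1 + x := by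
  simp [exp_eq_sum_range_of_pow_eq_zero h, sum_range_succ]

end NormedSpace

namespace Matrix

variable {R : Type*} [CommRing R] [NoZeroDivisors R]

theorem lower_eq_zero_and_diag_eq_of_commute_jordan {A : Matrix (Fin 2) (Fin 2) R} {a c : R}
    (hc : c ≠ 0) (h : Commute A !![a, c; 0, a]) : A 1 0 = 0 ∧ A 0 0 = A 1 1 := by
  have h10 := congrFun₂ h.eq 1 1
  have h01 := congrFun₂ h.eq 0 1
  simp only [mul_apply, Fin.sum_univ_two, of_apply, cons_val', cons_val_zero, cons_val_one,
    empty_val', cons_val_fin_one] at h10 h01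
  exact ⟨(mul_eq_zero.mp (by linear_combination h10)).resolve_right hc,
    mul_left_cancel₀ hc (by linear_combination h01)⟩

theorem sq_eq_zero_of_trace_eq_zero_of_commute_jordan [NeZero (2 : R)]
    {A : Matrix (Fin 2) (Fin 2) R} (hA : A.trace = 0) {a c : R}
    (hc : c ≠ 0) (h : Commute A !![a, c; 0, a]) : A ^ 2 = 0 := by
  obtain ⟨h10, hdiag⟩ := lower_eq_zero_and_diag_eq_of_commute_jordan hc h
  have h00 : A 0 0 = 0 := by
    rw [trace_fin_two, ← hdiag, ← two_mul] at hA
    exact (mul_eq_zero.mp hA).resolve_left two_ne_zero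
  rw [eta_fin_two A, h10, h00, ← hdiag, h00]
  ext i j; fin_cases i <;> fin_cases j <;> simp [sq]

end Matrix

theorem traceless_exp_ne_jordan (A : Matrix (Fin 2) (Fin 2) ℂ) (hA : A.trace = 0)
    (c : ℂ) (hc : c ≠ 0) :
    NormedSpace.exp A ≠ !![(-1 : ℂ), c; 0, -1] := by
  intro hexp
  have hsq : A ^ 2 = 0 := Matrix.sq_eq_zero_of_trace_eq_zero_of_commute_jordan hA hc
    (hexp ▸ (Commute.refl A).exp_right)
  have htr := congrArg Matrix.trace hexp
  rw [NormedSpace.exp_eq_one_add_of_sq_eq_zero hsq, Matrix.trace_add, hA,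
    Matrix.trace_fin_two_of] at htr
  norm_num at htr
end

section
/- For 1 ≤ k ≤ n and scalar s, the product (Id + sQ_1)···(Id + sQ_k) equals the block matrix [[A(s)+B(s), C(s)],[0, Id_{n−k}]], where A(s) is k×k with A_{i,j} = (s+1)^{j−i+1} − (s+1)^{j−i−1} for i<j, A_{i,i} = s+1, A_{i,j} = 0 for i>j; B(s) is k×k with B_{i,j} = (s+1)^{k−i} − (s+1)^{k−i+1}; and C(s) is k×(n−k) with C_{i,j} = (s+1)^{k−i+1} − (s+1)^{k−i}. -/
/-- The matrix with entries `(Q u) i j = δ_{i,u} · sgn(j − u)`. -/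
def Q (n : ℕ) (u : Fin n) : Matrix (Fin n) (Fin n) ℝ :=
  Matrix.of fun i j => if i = u then (((j : ℤ) - (u : ℤ)).sign : ℝ) else 0

/-- The ordered partial product `(Id + sQ₁)⋯(Id + sQ_k)`. -/
noncomputable def partialProd (n : ℕ) (s : ℝ) (k : ℕ) : Matrix (Fin n) (Fin n) ℝ :=
  (((List.finRange n).take k).map fun u => 1 + s • Q n u).prod


lemma partialProd_succ (n : ℕ) (s : ℝ) (k : ℕ) (hk : k < n) :
    partialProd n s (k+1) = partialProd n s k * (1 + s • Q n ⟨k, hk⟩) := by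
  unfold partialProd
  rw [List.take_succ]
  simp [List.getElem?_eq_getElem, List.getElem_finRange, hk]

lemma mul_entry (n : ℕ) (s : ℝ) (M : Matrix (Fin n) (Fin n) ℝ) (u i j : Fin n) :
    (M * (1 + s • Q n u)) i j
      = M i j + s * (((j : ℤ) - (u : ℤ)).sign : ℝ) * M i u := by
  rw [mul_add, mul_one, Matrix.add_apply, Matrix.mul_smul, Matrix.smul_apply]
  simp only [Q, Matrix.mul_apply, Matrix.of_apply, mul_ite, mul_zero,
    Finset.sum_ite_eq', Finset.mem_univ, if_true, smul_eq_mul]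
  ring

set_option maxHeartbeats 1600000 in
/-- The explicit entrywise formula (0-indexed) for `(Id + sQ₁)⋯(Id + sQ_k)`:
inside the leading `k × k` block it is `A(s) + B(s)`, to the right of it the
entries are `C(s)` (depending only on the row), below it is `[0 | Id]`. -/
theorem partialProd_entries (n k : ℕ) (hk : k ≤ n) (s : ℝ) (i j : Fin n) :
    partialProd n s k i j =
      if (i : ℕ) < k ∧ (j : ℕ) < k then
        -- A(s) entry
        ((if (i : ℕ) < (j : ℕ) then
            (s + 1) ^ ((j : ℕ) - (i : ℕ) + 1) - (s + 1) ^ ((j : ℕ) - (i : ℕ) - 1)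
          else if (i : ℕ) = (j : ℕ) then s + 1 else 0)
        -- plus B(s) entry
        + ((s + 1) ^ (k - 1 - (i : ℕ)) - (s + 1) ^ (k - (i : ℕ))))
      else if (i : ℕ) < k ∧ k ≤ (j : ℕ) then
        -- C(s) entry
        (s + 1) ^ (k - (i : ℕ)) - (s + 1) ^ (k - 1 - (i : ℕ))
      else if i = j then 1 else 0 := by
  induction k generalizing j with
  | zero =>
    simp [partialProd, Matrix.one_apply]
  | succ k IH =>
    have hk' : k < n := hk
    rw [partialProd_succ n s k hk', mul_entry, IH hk'.le j, IH hk'.le ⟨k, hk'⟩]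

    have hu : ((⟨k, hk'⟩ : Fin n) : ℕ) = k := rfl
    simp only [Fin.ext_iff, hu]
    rcases lt_trichotomy (i : ℕ) k with hi | hi | hi <;>
      rcases lt_trichotomy (j : ℕ) k with hj | hj | hj
    · -- i < k, j < k
      have hs : ((((j:ℤ) - (k:ℤ)).sign : ℝ)) = -1 := by
        rw [Int.sign_eq_neg_one_iff_neg.mpr (by omega)]; norm_num
      obtain ⟨m, hm⟩ : ∃ m, k - 1 - (i:ℕ) = m := ⟨_, rfl⟩
      rw [hs, show k - (i:ℕ) = m + 1 by omega, show k + 1 - (i:ℕ) = m + 2 by omega,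
        show k + 1 - 1 - (i:ℕ) = m + 1 by omega, hm]
      split_ifs <;> first | omega | ring
    · -- i < k, j = k
      have hs : ((((j:ℤ) - (k:ℤ)).sign : ℝ)) = 0 := by
        rw [show ((j:ℤ) - (k:ℤ)) = 0 by omega]; norm_num
      obtain ⟨m, hm⟩ : ∃ m, k - 1 - (i:ℕ) = m := ⟨_, rfl⟩
      rw [hs, show (j:ℕ) - (i:ℕ) + 1 = m + 2 by omega, show (j:ℕ) - (i:ℕ) - 1 = m by omega,
        show k - (i:ℕ) = m + 1 by omega, show k + 1 - (i:ℕ) = m + 2 by omega,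
        show k + 1 - 1 - (i:ℕ) = m + 1 by omega, hm]
      split_ifs <;> first | omega | ring
    · -- i < k, j > k
      have hs : ((((j:ℤ) - (k:ℤ)).sign : ℝ)) = 1 := by
        rw [Int.sign_eq_one_iff_pos.mpr (by omega)]; norm_num
      obtain ⟨m, hm⟩ : ∃ m, k - 1 - (i:ℕ) = m := ⟨_, rfl⟩
      rw [hs, show k - (i:ℕ) = m + 1 by omega, show k + 1 - (i:ℕ) = m + 2 by omega,
        show k + 1 - 1 - (i:ℕ) = m + 1 by omega, hm]
      split_ifs <;> first | omega | ring
    · -- i = k, j < k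
      have hs : ((((j:ℤ) - (k:ℤ)).sign : ℝ)) = -1 := by
        rw [Int.sign_eq_neg_one_iff_neg.mpr (by omega)]; norm_num
      rw [hs, show k - (i:ℕ) = 0 by omega, show k - 1 - (i:ℕ) = 0 by omega,
        show k + 1 - (i:ℕ) = 1 by omega, show k + 1 - 1 - (i:ℕ) = 0 by omega]
      split_ifs <;> first | omega | ring
    · -- i = k, j = k
      have hs : ((((j:ℤ) - (k:ℤ)).sign : ℝ)) = 0 := by
        rw [show ((j:ℤ) - (k:ℤ)) = 0 by omega]; norm_num
      rw [hs, show k - (i:ℕ) = 0 by omega, show k - 1 - (i:ℕ) = 0 by omega,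
        show k + 1 - (i:ℕ) = 1 by omega, show k + 1 - 1 - (i:ℕ) = 0 by omega]
      split_ifs <;> first | omega | ring
    · -- i = k, j > k
      have hs : ((((j:ℤ) - (k:ℤ)).sign : ℝ)) = 1 := by
        rw [Int.sign_eq_one_iff_pos.mpr (by omega)]; norm_num
      rw [hs, show k - (i:ℕ) = 0 by omega, show k - 1 - (i:ℕ) = 0 by omega,
        show k + 1 - (i:ℕ) = 1 by omega, show k + 1 - 1 - (i:ℕ) = 0 by omega]
      split_ifs <;> first | omega | ring
    · -- i > k, j < k
      have hs : ((((j:ℤ) - (k:ℤ)).sign : ℝ)) = -1 := by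
        rw [Int.sign_eq_neg_one_iff_neg.mpr (by omega)]; norm_num
      rw [hs]; split_ifs <;> first | omega | ring
    · -- i > k, j = k
      have hs : ((((j:ℤ) - (k:ℤ)).sign : ℝ)) = 0 := by
        rw [show ((j:ℤ) - (k:ℤ)) = 0 by omega]; norm_num
      rw [hs]; split_ifs <;> first | omega | ring
    · -- i > k, j > k
      have hs : ((((j:ℤ) - (k:ℤ)).sign : ℝ)) = 1 := by
        rw [Int.sign_eq_one_iff_pos.mpr (by omega)]; norm_num
      rw [hs]; split_ifs <;> first | omega | ring
end

section
/- Let P(s) = (Id + sQ_1)···(Id + sQ_n) with Q_u as above. If s + 1 ∉ {1, −1}, then every eigenvalue of P(s) has geometric multiplicity at most 1, i.e., for every scalar λ, rank(P(s) − λ·Id) ≥ n − 1. -/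
open Matrix Finset Module LinearMap

/-- The ordered product `P(s) = (Id + sQ₁)⋯(Id + sQ_n)`. -/
noncomputable def P (n : ℕ) (s : ℝ) : Matrix (Fin n) (Fin n) ℝ :=
  ((List.finRange n).map fun u => 1 + s • Q n u).prod

noncomputable def Pdrop (n : ℕ) (s : ℝ) (k : ℕ) : Matrix (Fin n) (Fin n) ℝ :=
  (((List.finRange n).drop k).map fun u => 1 + s • Q n u).prod

lemma Q_mulVec (n : ℕ) (u : Fin n) (w : Fin n → ℝ) (i : Fin n) :
    (Q n u).mulVec w i = if i = u then
      (∑ j, if u < j then w j else 0) - (∑ j, if j < u then w j else 0) else 0 := by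
  simp only [Matrix.mulVec, dotProduct, Q, Matrix.of_apply]
  by_cases h : i = u
  · simp only [h, if_pos rfl, if_true]
    rw [← Finset.sum_sub_distrib]
    refine Finset.sum_congr rfl fun j _ => ?_
    rcases lt_trichotomy (u : ℕ) (j : ℕ) with hj | hj | hj
    · have h1 : ((j:ℤ) - (u:ℤ)).sign = 1 := Int.sign_eq_one_of_pos (by omega)
      have h2 : u < j := hj
      have h3 : ¬ (j < u) := by rw [Fin.lt_def]; omega
      rw [h1, if_pos h2, if_neg h3]; push_cast; ring
    · have h1 : ((j:ℤ) - (u:ℤ)).sign = 0 := by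
        have : (j : ℤ) = (u : ℤ) := by omega
        simp [this]
      have h2 : ¬ (u < j) := by rw [Fin.lt_def]; omega
      have h3 : ¬ (j < u) := by rw [Fin.lt_def]; omega
      rw [h1, if_neg h2, if_neg h3]; push_cast; ring
    · have h1 : ((j:ℤ) - (u:ℤ)).sign = -1 := Int.sign_eq_neg_one_of_neg (by omega)
      have h2 : ¬ (u < j) := by rw [Fin.lt_def]; omega
      have h3 : j < u := hj
      rw [h1, if_neg h2, if_pos h3]; push_cast; ring
  · simp [h]

lemma key (n : ℕ) (s : ℝ) (x : Fin n → ℝ) :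
    ∀ m k, k ≤ n → n - k = m →
    (∀ j : Fin n, (j : ℕ) < k → (Pdrop n s k).mulVec x j = x j) ∧
    (∀ u : Fin n, k ≤ (u : ℕ) → (Pdrop n s k).mulVec x u =
      x u + s * ((∑ j, if u < j then (Pdrop n s k).mulVec x j else 0)
               - (∑ j, if j < u then x j else 0))) := by
  intro m
  induction m with
  | zero =>
    intro k hk hm
    have hnil : (List.finRange n).drop k = [] :=
      List.drop_eq_nil_of_le (by simp; omega)
    have hP : Pdrop n s k = 1 := by simp [Pdrop, hnil]
    rw [hP]
    constructor
    · intro j _; rw [Matrix.one_mulVec]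
    · intro u hu; exact absurd u.isLt (by omega)
  | succ m ih =>
    intro k hk hm
    have hkn : k < n := by omega
    have hd : (List.finRange n).drop k = ⟨k, hkn⟩ :: (List.finRange n).drop (k+1) := by
      rw [List.drop_eq_getElem_cons (by simpa using hkn)]
      congr 1
      apply Fin.ext
      simp [List.getElem_finRange]
    have hP : Pdrop n s k = (1 + s • Q n ⟨k, hkn⟩) * Pdrop n s (k+1) := by
      rw [Pdrop, hd, List.map_cons, List.prod_cons]; rfl
    set w := (Pdrop n s (k+1)).mulVec x with hw
    obtain ⟨ih1, ih2⟩ := ih (k+1) (by omega) (by omega)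
    rw [← hw] at ih1 ih2
    have hz : ∀ i, (Pdrop n s k).mulVec x i = w i + s * ((Q n ⟨k, hkn⟩).mulVec w i) := by
      intro i
      rw [hP, ← Matrix.mulVec_mulVec, Matrix.add_mulVec, Matrix.one_mulVec,
        Matrix.smul_mulVec]
      simp [hw]
    set z := (Pdrop n s k).mulVec x with hzdef
    have hz' : ∀ i : Fin n, i ≠ ⟨k, hkn⟩ → z i = w i := by
      intro i hi; rw [hz, Q_mulVec, if_neg hi]; ring
    constructor
    · intro j hj
      have hne : j ≠ ⟨k, hkn⟩ := by
        intro h; rw [h] at hj; simp at hj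
      rw [hz' j hne, ih1 j (by omega)]
    · intro u hu
      have hS : (∑ j, if u < j then z j else 0) = ∑ j, if u < j then w j else 0 := by
        refine Finset.sum_congr rfl fun j _ => ?_
        by_cases hj : u < j
        · have hne : j ≠ ⟨k, hkn⟩ := by
            intro h; rw [h] at hj; rw [Fin.lt_def] at hj; simp at hj; omega
          rw [if_pos hj, if_pos hj, hz' j hne]
        · rw [if_neg hj, if_neg hj]
      rcases eq_or_lt_of_le hu with he | hlt
      · have hu' : u = ⟨k, hkn⟩ := Fin.ext he.symm
        subst hu'
        rw [hz, Q_mulVec, if_pos rfl, ← hS]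
        have hwu : w ⟨k, hkn⟩ = x ⟨k, hkn⟩ := ih1 _ (by simp)
        have hT : (∑ j, if j < (⟨k, hkn⟩ : Fin n) then w j else 0)
            = ∑ j, if j < (⟨k, hkn⟩ : Fin n) then x j else 0 := by
          refine Finset.sum_congr rfl fun j _ => ?_
          by_cases hj : j < (⟨k, hkn⟩ : Fin n)
          · rw [if_pos hj, if_pos hj, ih1 j (by rw [Fin.lt_def] at hj; simp at hj; omega)]
          · rw [if_neg hj, if_neg hj]
        rw [hwu, hT]
      · have hne : u ≠ ⟨k, hkn⟩ := by
          intro h; rw [h] at hlt; simp at hlt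
        rw [hz' u hne, ih2 u (by omega), hS]

lemma eigen_eq (n : ℕ) (s lam : ℝ) (x : Fin n → ℝ)
    (hx : (P n s).mulVec x = lam • x) (u : Fin n) :
    lam * x u = x u + s * (lam * (∑ j, if u < j then x j else 0)
      - (∑ j, if j < u then x j else 0)) := by
  have hP0 : P n s = Pdrop n s 0 := rfl
  obtain ⟨-, h2⟩ := key n s x n 0 (Nat.zero_le n) (by omega)
  have hthis := h2 u (Nat.zero_le _)
  rw [← hP0, hx] at hthis
  have hs : (∑ j, if u < j then (lam • x) j else 0)
      = lam * ∑ j, if u < j then x j else 0 := by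
    rw [Finset.mul_sum]
    exact Finset.sum_congr rfl fun j _ => by by_cases h : u < j <;> simp [h]
  rw [hs] at hthis
  simpa using hthis

lemma step_rel (n : ℕ) (s lam : ℝ) (x : Fin n → ℝ)
    (hx : (P n s).mulVec x = lam • x) (i : ℕ) (h : i + 1 < n) :
    (lam - (s+1)) * x ⟨i, by omega⟩ = ((s+1) * lam - 1) * x ⟨i+1, h⟩ := by
  set u : Fin n := ⟨i, by omega⟩ with hu
  set u' : Fin n := ⟨i+1, h⟩ with hu'
  have e1 := eigen_eq n s lam x hx u
  have e2 := eigen_eq n s lam x hx u'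
  have hS : (∑ j, if u < j then x j else 0)
      = x u' + ∑ j, if u' < j then x j else 0 := by
    have hpt : ∀ j : Fin n, (if u < j then x j else 0)
        = (if j = u' then x j else 0) + (if u' < j then x j else 0) := by
      intro j
      simp only [Fin.lt_def, Fin.ext_iff, hu, hu']
      split_ifs <;> (try ring) <;> omega
    rw [Finset.sum_congr rfl fun j _ => hpt j, Finset.sum_add_distrib,
      Finset.sum_ite_eq' Finset.univ u' x, if_pos (Finset.mem_univ _)]
  have hT : (∑ j, if j < u' then x j else 0)
      = (∑ j, if j < u then x j else 0) + x u := by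
    have hpt : ∀ j : Fin n, (if j < u' then x j else 0)
        = (if j < u then x j else 0) + (if j = u then x j else 0) := by
      intro j
      simp only [Fin.lt_def, Fin.ext_iff, hu, hu']
      split_ifs <;> (try ring) <;> omega
    rw [Finset.sum_congr rfl fun j _ => hpt j, Finset.sum_add_distrib,
      Finset.sum_ite_eq' Finset.univ u x, if_pos (Finset.mem_univ _)]
  rw [hS] at e1
  rw [hT] at e2
  linear_combination e1 - e2

/-- If `s + 1 ∉ {1, -1}` then every eigenvalue of `P(s)` has geometric
multiplicity at most one, i.e. `rank (P(s) − λ·Id) ≥ n − 1` for every `λ`. -/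
theorem geom_mult_le_one (n : ℕ) (s : ℝ) (h1 : s + 1 ≠ 1) (h2 : s + 1 ≠ -1) (lam : ℝ) :
    n - 1 ≤ (P n s - lam • (1 : Matrix (Fin n) (Fin n) ℝ)).rank := by
  rcases Nat.eq_zero_or_pos n with hn | hn
  · subst hn; exact Nat.zero_le _
  set M := P n s - lam • (1 : Matrix (Fin n) (Fin n) ℝ) with hM
  have hker : ∀ x : Fin n → ℝ, M.mulVec x = 0 ↔ (P n s).mulVec x = lam • x := by
    intro x
    rw [hM, Matrix.sub_mulVec, Matrix.smul_mulVec, Matrix.one_mulVec, sub_eq_zero]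
  have hab : ¬ (lam - (s+1) = 0 ∧ (s+1) * lam - 1 = 0) := by
    rintro ⟨ha, hb⟩
    have h3 : (s + 1 - 1) * ((s + 1) + 1) = 0 := by linear_combination hb - (s+1) * ha
    rcases mul_eq_zero.mp h3 with h | h
    · exact h1 (by linarith)
    · exact h2 (by linarith)
  set i0 : Fin n := if (s+1) * lam - 1 = 0 then ⟨n-1, by omega⟩ else ⟨0, hn⟩ with hi0
  have hinj : ∀ x : Fin n → ℝ, (P n s).mulVec x = lam • x → x i0 = 0 → x = 0 := by
    intro x hx hx0
    by_cases hb : (s+1) * lam - 1 = 0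
    · have ha : lam - (s+1) ≠ 0 := fun ha => hab ⟨ha, hb⟩
      funext i
      by_cases hi : (i : ℕ) + 1 < n
      · have hrel := step_rel n s lam x hx i hi
        rw [hb, zero_mul] at hrel
        have : x ⟨(i : ℕ), by omega⟩ = 0 := by
          rcases mul_eq_zero.mp hrel with h | h
          · exact absurd h ha
          · exact h
        simpa using this
      · have hlast : i = i0 := by
          rw [hi0, if_pos hb]
          apply Fin.ext
          simp
          omega
        rw [hlast]; exact hx0
    · have hx0' : x ⟨0, hn⟩ = 0 := by
        rw [hi0, if_neg hb] at hx0; exact hx0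
      have main : ∀ m, ∀ hm : m < n, x ⟨m, hm⟩ = 0 := by
        intro m
        induction m with
        | zero => intro hm; exact hx0'
        | succ m ihm =>
          intro hm
          have hrel := step_rel n s lam x hx m hm
          rw [ihm (by omega), mul_zero] at hrel
          rcases mul_eq_zero.mp hrel.symm with h | h
          · exact absurd h hb
          · exact h
      funext i
      have := main i i.isLt
      simpa using this
  have hrn := LinearMap.finrank_range_add_finrank_ker (Matrix.mulVecLin M)
  rw [Module.finrank_fin_fun] at hrn
  have hkerle : finrank ℝ ↥(LinearMap.ker (Matrix.mulVecLin M)) ≤ 1 := by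
    set f : ↥(LinearMap.ker (Matrix.mulVecLin M)) →ₗ[ℝ] ℝ :=
      (LinearMap.proj i0).comp (LinearMap.ker (Matrix.mulVecLin M)).subtype with hf
    have hfinj : Function.Injective f := by
      rw [← LinearMap.ker_eq_bot]
      apply LinearMap.ker_eq_bot'.mpr
      rintro ⟨x, hxmem⟩ hfx
      have hx : (P n s).mulVec x = lam • x := by
        apply (hker x).mp
        simpa [Matrix.mulVecLin_apply] using hxmem
      have hx0 : x i0 = 0 := hfx
      exact Subtype.ext (hinj x hx hx0)
    have := LinearMap.finrank_le_finrank_of_injective hfinj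
    simpa using this
  have hrank : M.rank = finrank ℝ ↥(LinearMap.range (Matrix.mulVecLin M)) := rfl
  omega
end

section
/- An invertible real n×n matrix P that has −1 as an eigenvalue with geometric multiplicity exactly 1 is not the exponential of any real n×n matrix. -/
/-!
Since `M` commutes with `exp M`, it preserves the line `ker (exp M + 1)`, so it acts on that
line by a real scalar `c`. Then `exp M` acts on it by `Real.exp c > 0`, not by `-1`.
-/

open NormedSpace Module Set LinearMap
open scoped Matrix

namespace Matrix

variable {m : Type*} [Fintype m]

theorem finrank_ker_mulVecLin {K : Type*} [Field K] (A : Matrix m m K) :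
    finrank K (ker A.mulVecLin) = Fintype.card m - A.rank := by
  have := A.mulVecLin.finrank_range_add_finrank_ker
  rw [Module.finrank_fintype_fun_eq_card] at this
  unfold Matrix.rank
  omega

theorem mapsTo_ker_mulVecLin_of_commute {R : Type*} [CommRing R] {A B : Matrix m m R}
    (h : Commute A B) : MapsTo B.mulVecLin (ker A.mulVecLin) (ker A.mulVecLin) := by
  intro v hv
  simp only [SetLike.mem_coe, mem_ker, mulVecLin_apply] at hv ⊢
  rw [mulVec_mulVec, h.eq, ← mulVec_mulVec, hv, mulVec_zero]

open scoped Norms.Operator in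
theorem exp_mulVec_of_mulVec_eq_smul [DecidableEq m] {𝕂 : Type*} [RCLike 𝕂] {A : Matrix m m 𝕂}
    {v : m → 𝕂} {c : 𝕂} (h : A *ᵥ v = c • v) : exp A *ᵥ v = exp c • v := by
  have hpow (k : ℕ) : A ^ k *ᵥ v = c ^ k • v := by
    induction k with
    | zero => simp
    | succ k ih => rw [pow_succ, ← mulVec_mulVec, h, mulVec_smul, ih, smul_smul, pow_succ']
  let applyAt : Matrix m m 𝕂 →L[𝕂] m → 𝕂 :=
    ((mulVecBilin 𝕂 𝕂).flip v).toContinuousLinearMap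
  refine ((exp_series_hasSum_exp' (𝕂 := 𝕂) A).mapL applyAt).unique ?_
  simpa [applyAt, hpow, smul_smul] using (exp_series_hasSum_exp' (𝕂 := 𝕂) c).smul_const v

end Matrix

theorem Submodule.exists_apply_eq_smul_of_finrank_eq_one {K V : Type*} [DivisionRing K]
    [AddCommGroup V] [Module K V] {W : Submodule K V} (hW : finrank K W = 1) {f : V →ₗ[K] V}
    (hf : MapsTo f W W) {v : V} (hv : v ∈ W) : ∃ c : K, f v = c • v := by
  rcases eq_or_ne v 0 with rfl | hv0
  · exact ⟨0, by simp⟩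
  obtain ⟨c, hc⟩ := (finrank_eq_one_iff_of_nonzero' (⟨v, hv⟩ : W) (by simpa)).mp hW ⟨f v, hf hv⟩
  exact ⟨c, congrArg Subtype.val hc.symm⟩

theorem not_exp_of_neg_one_geom_mult_one_general (n : ℕ) (P : Matrix (Fin n) (Fin n) ℝ)
    (hmult : n - (P + 1).rank = 1) :
    ¬ ∃ M : Matrix (Fin n) (Fin n) ℝ, NormedSpace.exp M = P := by
  rintro ⟨M, rfl⟩
  have hker : finrank ℝ (ker (exp M + 1).mulVecLin) = 1 := by
    rw [Matrix.finrank_ker_mulVecLin, Fintype.card_fin, hmult]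
  obtain ⟨⟨v, hv⟩, hv0⟩ := finrank_pos_iff_exists_ne_zero.mp (hker ▸ Nat.one_pos)
  replace hv0 : v ≠ 0 := by simpa using hv0
  have hPv : exp M *ᵥ v = -v := by
    rw [mem_ker, Matrix.mulVecLin_apply, Matrix.add_mulVec, Matrix.one_mulVec] at hv
    exact eq_neg_of_add_eq_zero_left hv
  have hcomm : Commute (exp M + 1) M := (Commute.refl M).exp_left.add_left (Commute.one_left M)
  obtain ⟨c, hc⟩ := Submodule.exists_apply_eq_smul_of_finrank_eq_one hker
    (Matrix.mapsTo_ker_mulVecLin_of_commute hcomm) hv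
  have hexp : Real.exp c = -1 := by
    refine smul_left_injective ℝ hv0 (?_ : Real.exp c • v = (-1 : ℝ) • v)
    rw [Real.exp_eq_exp_ℝ, ← Matrix.exp_mulVec_of_mulVec_eq_smul hc, hPv, neg_one_smul]
  linarith [Real.exp_pos c]

/-- An invertible real matrix having `-1` as an eigenvalue of geometric multiplicity
exactly one is not the exponential of any real matrix. -/
theorem not_exp_of_neg_one_geom_mult_one (n : ℕ) (P : Matrix (Fin n) (Fin n) ℝ)
    (hP : IsUnit P) (hmult : n - (P + 1).rank = 1) :
    ¬ ∃ M : Matrix (Fin n) (Fin n) ℝ, NormedSpace.exp M = P :=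
  not_exp_of_neg_one_geom_mult_one_general n P hmult
end

section
/- For t in a neighborhood of 0, the formal power series identity (in the algebra of 2×2 upper triangular complex matrices) exp([[πt, επt·tanh(πt/2)],[0, −πt]]) = exp([[πt/2, −(π/2)εt],[0, −πt/2]])·exp([[πt/2, (π/2)εt],[0, −πt/2]]) holds. -/
/-!
Writing the off-diagonal entry as `s * a`, the matrix `!![a, s * a; 0, -a]` is conjugate by the
unipotent `!![1, -s / 2; 0, 1]` to `diag(a, -a)`, so its exponential is
`!![exp a, s * sinh a; 0, exp (-a)]` (with no division, hence valid also at `a = 0`).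
With `a = π t / 2` both sides of the identity are then explicit, and comparing the corner entries
reduces it to `tanh a * sinh (2 a) = 2 sinh a ^ 2 = sinh a * (exp a - exp (-a))`.
-/

open Real Matrix

lemma Matrix.inv_unitriangular_fin_two {R : Type*} [CommRing R] (c : R) :
    !![1, c; 0, 1]⁻¹ = !![1, -c; 0, 1] :=
  inv_eq_right_inv (by simp [one_fin_two])

lemma Matrix.upperTriangular_eq_conj_diagonal {R : Type*} [Field R] [NeZero (2 : R)] (a s : R) :
    !![a, s * a; 0, -a] = !![1, -s / 2; 0, 1] * diagonal ![a, -a] * !![1, -s / 2; 0, 1]⁻¹ := by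
  rw [inv_unitriangular_fin_two, diagonal_vec2]
  simp
  field_simp
  ring

lemma Matrix.exp_upperTriangular (a s : ℝ) :
    NormedSpace.exp !![a, s * a; 0, -a] = !![exp a, s * sinh a; 0, exp (-a)] := by
  have hunit : IsUnit (!![1, -s / 2; 0, 1] : Matrix (Fin 2) (Fin 2) ℝ) := by
    simp [isUnit_iff_isUnit_det, det_fin_two]
  rw [upperTriangular_eq_conj_diagonal, exp_conj _ _ hunit, exp_diagonal,
    inv_unitriangular_fin_two, diagonal_fin_two]
  simp [← exp_eq_exp_ℝ, sinh_eq]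
  ring

lemma Real.tanh_mul_sinh_two_mul (x : ℝ) : tanh x * sinh (2 * x) = 2 * sinh x ^ 2 := by
  rw [sinh_two_mul, tanh_eq_sinh_div_cosh]
  field_simp

lemma Matrix.exp_upperTriangular_tanh_eq_mul (a s : ℝ) :
    NormedSpace.exp !![2 * a, s * tanh a * (2 * a); 0, -(2 * a)] =
      NormedSpace.exp !![a, -s * a; 0, -a] * NormedSpace.exp !![a, s * a; 0, -a] := by
  rw [exp_upperTriangular, exp_upperTriangular, exp_upperTriangular, mul_fin_two, mul_assoc,
    tanh_mul_sinh_two_mul]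
  simp [← exp_add, two_mul, sinh_eq]
  ring

theorem balanced_case_exp_identity (t ε : ℝ) :
    NormedSpace.exp (!![π * t, ε * π * t * Real.tanh (π * t / 2); 0, -(π * t)]) =
      NormedSpace.exp (!![π * t / 2, -(π / 2) * ε * t; 0, -(π * t / 2)]) *
        NormedSpace.exp (!![π * t / 2, (π / 2) * ε * t; 0, -(π * t / 2)]) := by
  have key := exp_upperTriangular_tanh_eq_mul (π * t / 2) ε
  ring_nf at key ⊢
  exact key
end
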